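/- arXiv:2110.05110 — 12 statements merged into one kernel-verified Lean document; each statement's English description precedes it below -/
import Mathlib

section
/- (Proposition 1, Region 2.) Under the stated hypotheses, set η₂ = (θ₂+α₂)/ξ₂. If 0 ≤ η₂ ≤ 1 and (θ₁+α₁)/ξ₀ < η₂, then (0, η₂) is the unique maximizer of J over the box B = [0,τ] × [0,1]. -/
/-- Proposition 1, Region 2: `(0, (θ₂+α₂)/ξ₂)` is the unique maximizer of `J` over the box. -/
theorem prop1_region2 (τ θ₁ θ₂ α₁ α₂ ξ₀ ξ₁ ξ₂ : ℝ)
    (hτ : 0 < τ) (hξ₀ : 0 < ξ₀) (hξ₁ : 0 < ξ₁) (hξ₂ : 0 < ξ₂)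
    (hdet : 0 < ξ₁ * ξ₂ - ξ₀ ^ 2)
    (η₂ : ℝ) (hη₂ : η₂ = (θ₂ + α₂) / ξ₂)
    (h1 : 0 ≤ η₂) (h2 : η₂ ≤ 1) (h3 : (θ₁ + α₁) / ξ₀ < η₂) :
    let J : ℝ × ℝ → ℝ := fun n =>
      (θ₁ + α₁) * n.1 + (θ₂ + α₂) * n.2
        - (1 / 2) * (ξ₁ * n.1 ^ 2 + 2 * ξ₀ * n.1 * n.2 + ξ₂ * n.2 ^ 2)
    let B : Set (ℝ × ℝ) := Set.Icc (0 : ℝ) τ ×ˢ Set.Icc (0 : ℝ) 1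
    (((0 : ℝ), η₂) ∈ B ∧ (∀ q ∈ B, J q ≤ J ((0 : ℝ), η₂))) ∧
      ∀ q ∈ B, J q = J ((0 : ℝ), η₂) → q = ((0 : ℝ), η₂) := by
  intro J B
  have hb : θ₂ + α₂ = ξ₂ * η₂ := by
    rw [hη₂]
    field_simp
  have ha : θ₁ + α₁ < ξ₀ * η₂ := by
    have := (div_lt_iff₀ hξ₀).mp h3
    linarith
  constructor
  · constructor
    · exact ⟨⟨le_rfl, hτ.le⟩, h1, h2⟩
    · rintro ⟨x, y⟩ ⟨⟨hx0, hxτ⟩, hy0, hy1⟩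
      simp only [J, hb]
      nlinarith [sq_nonneg (ξ₂ * (y - η₂) + ξ₀ * x), mul_nonneg hdet.le (sq_nonneg x),
        mul_nonneg (mul_nonneg hξ₂.le hx0) (sub_nonneg.mpr ha.le), hξ₂]
  · rintro ⟨x, y⟩ ⟨⟨hx0, hxτ⟩, hy0, hy1⟩ heq
    simp only [J, hb] at heq
    have hx : x = 0 := by
      rcases eq_or_lt_of_le hx0 with h | h
      · exact h.symm
      · exfalso
        nlinarith [sq_nonneg (ξ₂ * (y - η₂) + ξ₀ * x), mul_nonneg hdet.le (sq_nonneg x),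
          mul_pos (mul_pos hξ₂ h) (sub_pos.mpr ha)]
    subst hx
    have hy : y = η₂ := by
      have h0 : ξ₂ * (y - η₂) ^ 2 = 0 := by linear_combination -2 * heq
      have := mul_eq_zero.mp h0
      rcases this with h | h
      · exact absurd h hξ₂.ne'
      · have := pow_eq_zero_iff (n := 2) (by norm_num) |>.mp h
        linarith
    simp [hy]
end

section
/- (Proposition 1, Region 3.) Under the stated hypotheses, set η₂ = (θ₂+α₂−τξ₀)/ξ₂. If 0 ≤ η₂ ≤ 1 and η₂ < (θ₁+α₁−τξ₁)/ξ₀, then (τ, η₂) is the unique maximizer of J over the box B = [0,τ] × [0,1]. -/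
/-- Proposition 1, Region 3: `(τ, (θ₂+α₂−τξ₀)/ξ₂)` is the unique maximizer of `J` over the box. -/
theorem prop1_region3 (τ θ₁ θ₂ α₁ α₂ ξ₀ ξ₁ ξ₂ : ℝ)
    (hτ : 0 < τ) (hξ₀ : 0 < ξ₀) (hξ₁ : 0 < ξ₁) (hξ₂ : 0 < ξ₂)
    (hdet : 0 < ξ₁ * ξ₂ - ξ₀ ^ 2)
    (η₂ : ℝ) (hη₂ : η₂ = (θ₂ + α₂ - τ * ξ₀) / ξ₂)
    (h1 : 0 ≤ η₂) (h2 : η₂ ≤ 1) (h3 : η₂ < (θ₁ + α₁ - τ * ξ₁) / ξ₀) :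
    let J : ℝ × ℝ → ℝ := fun n =>
      (θ₁ + α₁) * n.1 + (θ₂ + α₂) * n.2
        - (1 / 2) * (ξ₁ * n.1 ^ 2 + 2 * ξ₀ * n.1 * n.2 + ξ₂ * n.2 ^ 2)
    let B : Set (ℝ × ℝ) := Set.Icc (0 : ℝ) τ ×ˢ Set.Icc (0 : ℝ) 1
    ((τ, η₂) ∈ B ∧ (∀ q ∈ B, J q ≤ J (τ, η₂))) ∧
      ∀ q ∈ B, J q = J (τ, η₂) → q = (τ, η₂) := by
  intro J B
  have hb : θ₂ + α₂ = ξ₂ * η₂ + τ * ξ₀ := by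
    field_simp at hη₂; linarith
  have hg : ξ₀ * η₂ < θ₁ + α₁ - τ * ξ₁ := by
    rw [lt_div_iff₀ hξ₀] at h3; linarith
  -- key difference identity
  have key : ∀ q : ℝ × ℝ, J (τ, η₂) - J q =
      (θ₁ + α₁ - ξ₁ * τ - ξ₀ * η₂) * (τ - q.1)
        + (1/2) * (ξ₁ * (q.1 - τ)^2 + 2 * ξ₀ * (q.1 - τ) * (q.2 - η₂)
            + ξ₂ * (q.2 - η₂)^2) := by
    intro q
    simp only [J, hb]
    ring
  have quadnn : ∀ x y : ℝ, 0 ≤ ξ₁ * x^2 + 2 * ξ₀ * x * y + ξ₂ * y^2 := by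
    intro x y
    nlinarith [sq_nonneg (ξ₁ * x + ξ₀ * y), sq_nonneg y, mul_pos hξ₁ hξ₂, sq_nonneg x]
  refine ⟨⟨⟨⟨le_of_lt hτ, le_refl τ⟩, ⟨h1, h2⟩⟩, ?_⟩, ?_⟩
  · intro q hq
    have hq1 : q.1 ≤ τ := hq.1.2
    have hk := key q
    have hg2 : 0 ≤ (θ₁ + α₁ - ξ₁ * τ - ξ₀ * η₂) * (τ - q.1) :=
      mul_nonneg (by linarith) (by linarith)
    have hnn : 0 ≤ J (τ, η₂) - J q := by
      rw [hk]
      have := quadnn (q.1 - τ) (q.2 - η₂)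
      linarith
    linarith
  · intro q hq heq
    have hq1 : q.1 ≤ τ := hq.1.2
    have hk := key q
    rw [heq] at hk
    have hQ := quadnn (q.1 - τ) (q.2 - η₂)
    have hgpos : 0 < θ₁ + α₁ - ξ₁ * τ - ξ₀ * η₂ := by linarith
    have hg2 : 0 ≤ (θ₁ + α₁ - ξ₁ * τ - ξ₀ * η₂) * (τ - q.1) :=
      mul_nonneg (by linarith) (by linarith)
    have hz : (θ₁ + α₁ - ξ₁ * τ - ξ₀ * η₂) * (τ - q.1) = 0 := by linarith
    have h1' : q.1 = τ := by
      rcases mul_eq_zero.mp hz with h | h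
      · linarith
      · linarith
    have h2' : q.2 = η₂ := by
      rw [h1'] at hk
      have hz2 : (q.2 - η₂)^2 = 0 := by
        have : ξ₂ * (q.2 - η₂)^2 = 0 := by linarith [hk]; 
        exact (mul_eq_zero.mp this).resolve_left (ne_of_gt hξ₂)
      have := pow_eq_zero_iff (n := 2) (by norm_num) |>.mp hz2
      linarith
    exact Prod.ext h1' h2'
end

section
/- (Proposition 1, Region 4.) Under the stated hypotheses, set η₁ = (θ₁+α₁)/ξ₁. If 0 ≤ η₁ ≤ τ and θ₂+α₂ < ξ₀·η₁, then (η₁, 0) is the unique maximizer of J over the box B = [0,τ] × [0,1]. -/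
/-- Proposition 1, Region 4: `((θ₁+α₁)/ξ₁, 0)` is the unique maximizer of `J` over the box. -/
theorem prop1_region4 (τ θ₁ θ₂ α₁ α₂ ξ₀ ξ₁ ξ₂ : ℝ)
    (hτ : 0 < τ) (hξ₀ : 0 < ξ₀) (hξ₁ : 0 < ξ₁) (hξ₂ : 0 < ξ₂)
    (hdet : 0 < ξ₁ * ξ₂ - ξ₀ ^ 2)
    (η₁ : ℝ) (hη₁ : η₁ = (θ₁ + α₁) / ξ₁)
    (h1 : 0 ≤ η₁) (h2 : η₁ ≤ τ) (h3 : θ₂ + α₂ < ξ₀ * η₁) :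
    let J : ℝ × ℝ → ℝ := fun n =>
      (θ₁ + α₁) * n.1 + (θ₂ + α₂) * n.2
        - (1 / 2) * (ξ₁ * n.1 ^ 2 + 2 * ξ₀ * n.1 * n.2 + ξ₂ * n.2 ^ 2)
    let B : Set (ℝ × ℝ) := Set.Icc (0 : ℝ) τ ×ˢ Set.Icc (0 : ℝ) 1
    ((η₁, (0 : ℝ)) ∈ B ∧ (∀ q ∈ B, J q ≤ J (η₁, (0 : ℝ)))) ∧
      ∀ q ∈ B, J q = J (η₁, (0 : ℝ)) → q = (η₁, (0 : ℝ)) := by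
  intro J B
  have ha : θ₁ + α₁ = ξ₁ * η₁ := by rw [hη₁]; field_simp
  have key : ∀ x y : ℝ,
      2 * ξ₁ * (J (η₁, 0) - J (x, y)) = 2 * ξ₁ * (ξ₀ * η₁ - (θ₂ + α₂)) * y +
        ((ξ₁ * (x - η₁) + ξ₀ * y) ^ 2 + (ξ₁ * ξ₂ - ξ₀ ^ 2) * y ^ 2) := by
    intro x y
    simp only [J]
    rw [ha]
    ring
  have hc : 0 < ξ₀ * η₁ - (θ₂ + α₂) := by linarith
  constructor
  · refine ⟨⟨⟨h1, h2⟩, le_refl 0, zero_le_one⟩, ?_⟩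
    rintro ⟨x, y⟩ ⟨⟨hx0, hxτ⟩, hy0, hy1⟩
    have h := key x y
    have t1 : 0 ≤ 2 * ξ₁ * (ξ₀ * η₁ - (θ₂ + α₂)) * y := by positivity
    have t2 : 0 ≤ (ξ₁ * (x - η₁) + ξ₀ * y) ^ 2 + (ξ₁ * ξ₂ - ξ₀ ^ 2) * y ^ 2 := by
      have := mul_nonneg hdet.le (sq_nonneg y)
      positivity
    nlinarith [hξ₁]
  · rintro ⟨x, y⟩ ⟨⟨hx0, hxτ⟩, hy0, hy1⟩ heq
    have h := key x y
    rw [heq, sub_self, mul_zero] at h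
    have t2 : 0 ≤ (ξ₁ * (x - η₁) + ξ₀ * y) ^ 2 + (ξ₁ * ξ₂ - ξ₀ ^ 2) * y ^ 2 := by
      have := mul_nonneg hdet.le (sq_nonneg y)
      positivity
    have hy : y = 0 := by
      by_contra hne
      have hyp : 0 < y := hy0.lt_of_ne (Ne.symm hne)
      have : 0 < 2 * ξ₁ * (ξ₀ * η₁ - (θ₂ + α₂)) * y := by positivity
      linarith
    subst hy
    have hsq : (ξ₁ * (x - η₁)) ^ 2 = 0 := by nlinarith [sq_nonneg (ξ₁ * (x - η₁))]
    have hz : ξ₁ * (x - η₁) = 0 := pow_eq_zero_iff (n := 2) (by norm_num) |>.mp hsq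
    have hx : x = η₁ := by
      rcases mul_eq_zero.mp hz with h' | h'
      · exact absurd h' (ne_of_gt hξ₁)
      · linarith
    subst hx; rfl
end

section
/- (Proposition 1, Region 5.) Under the stated hypotheses, set η₁ = (θ₁+α₁−ξ₀)/ξ₁. If 0 ≤ η₁ ≤ τ and η₁ < (θ₂+α₂−ξ₂)/ξ₀, then (η₁, 1) is the unique maximizer of J over the box B = [0,τ] × [0,1]. -/
/-- Proposition 1, Region 5: `((θ₁+α₁−ξ₀)/ξ₁, 1)` is the unique maximizer of `J` over the box. -/
theorem prop1_region5 (τ θ₁ θ₂ α₁ α₂ ξ₀ ξ₁ ξ₂ : ℝ)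
    (hτ : 0 < τ) (hξ₀ : 0 < ξ₀) (hξ₁ : 0 < ξ₁) (hξ₂ : 0 < ξ₂)
    (hdet : 0 < ξ₁ * ξ₂ - ξ₀ ^ 2)
    (η₁ : ℝ) (hη₁ : η₁ = (θ₁ + α₁ - ξ₀) / ξ₁)
    (h1 : 0 ≤ η₁) (h2 : η₁ ≤ τ) (h3 : η₁ < (θ₂ + α₂ - ξ₂) / ξ₀) :
    let J : ℝ × ℝ → ℝ := fun n =>
      (θ₁ + α₁) * n.1 + (θ₂ + α₂) * n.2
        - (1 / 2) * (ξ₁ * n.1 ^ 2 + 2 * ξ₀ * n.1 * n.2 + ξ₂ * n.2 ^ 2)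
    let B : Set (ℝ × ℝ) := Set.Icc (0 : ℝ) τ ×ˢ Set.Icc (0 : ℝ) 1
    ((η₁, (1 : ℝ)) ∈ B ∧ (∀ q ∈ B, J q ≤ J (η₁, (1 : ℝ)))) ∧
      ∀ q ∈ B, J q = J (η₁, (1 : ℝ)) → q = (η₁, (1 : ℝ)) := by
  intro J B
  have hA : θ₁ + α₁ = ξ₁ * η₁ + ξ₀ := by
    field_simp at hη₁; linarith
  have hc : 0 < θ₂ + α₂ - ξ₀ * η₁ - ξ₂ := by
    rw [lt_div_iff₀ hξ₀] at h3; nlinarith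
  obtain ⟨c, hcdef⟩ : ∃ c : ℝ, c = θ₂ + α₂ - ξ₀ * η₁ - ξ₂ := ⟨_, rfl⟩
  rw [← hcdef] at hc
  have key : ∀ x y : ℝ,
      J (η₁, 1) - J (x, y) = c * (1 - y)
        + (1 / 2) * (ξ₁ * (x - η₁) ^ 2 + 2 * ξ₀ * (x - η₁) * (y - 1)
            + ξ₂ * (y - 1) ^ 2) := by
    intro x y
    simp only [J]
    rw [hcdef, hA]; ring
  have hQ : ∀ a b : ℝ, 0 ≤ ξ₁ * a ^ 2 + 2 * ξ₀ * a * b + ξ₂ * b ^ 2 := by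
    intro a b
    nlinarith [sq_nonneg (ξ₁ * a + ξ₀ * b), sq_nonneg b, mul_pos hξ₁ hξ₁]
  refine ⟨⟨⟨⟨h1, h2⟩, by norm_num⟩, ?_⟩, ?_⟩
  · rintro ⟨x, y⟩ ⟨⟨hx0, hxτ⟩, hy0, hy1⟩
    rw [← sub_nonneg, key x y]
    have h := hQ (x - η₁) (y - 1)
    have hcb : 0 ≤ c * (1 - y) :=
      mul_nonneg hc.le (by simp only [Set.mem_Icc] at hy1 ⊢; linarith)
    linarith
  · rintro ⟨x, y⟩ ⟨⟨hx0, hxτ⟩, hy0, hy1⟩ heq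
    simp only [Set.mem_Icc] at hx0 hxτ hy0 hy1
    have hk : (0 : ℝ) = c * (1 - y)
        + (1 / 2) * (ξ₁ * (x - η₁) ^ 2 + 2 * ξ₀ * (x - η₁) * (y - 1)
            + ξ₂ * (y - 1) ^ 2) := by
      rw [← key x y, heq, sub_self]
    have h := hQ (x - η₁) (y - 1)
    have hcb : 0 ≤ c * (1 - y) := mul_nonneg hc.le (by linarith)
    have hQ0 : ξ₁ * (x - η₁) ^ 2 + 2 * ξ₀ * (x - η₁) * (y - 1) + ξ₂ * (y - 1) ^ 2 = 0 := by
      linarith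
    have hy : y = 1 := by
      have h0 : c * (1 - y) = 0 := by linarith
      rcases mul_eq_zero.mp h0 with h' | h'
      · exact absurd h' (ne_of_gt hc)
      · linarith
    subst hy
    have hx : x = η₁ := by
      have hm : ξ₁ * (x - η₁) ^ 2 = 0 := by nlinarith [hQ0]
      have hs : (x - η₁) ^ 2 = 0 := (mul_eq_zero.mp hm).resolve_left (ne_of_gt hξ₁)
      have := pow_eq_zero_iff (n := 2) (by norm_num) |>.mp hs
      linarith
    simp [hx]
end

section
/- (Proposition 1, Region 7.) Under the stated hypotheses, if θ₁+α₁ < ξ₀ and ξ₂ < θ₂+α₂, then (0, 1) is the unique maximizer of J over the box B = [0,τ] × [0,1]. -/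
/-- Proposition 1, Region 7: `(0,1)` is the unique maximizer of `J` over the box. -/
theorem prop1_region7 (τ θ₁ θ₂ α₁ α₂ ξ₀ ξ₁ ξ₂ : ℝ)
    (hτ : 0 < τ) (hξ₀ : 0 < ξ₀) (hξ₁ : 0 < ξ₁) (hξ₂ : 0 < ξ₂)
    (hdet : 0 < ξ₁ * ξ₂ - ξ₀ ^ 2)
    (h1 : θ₁ + α₁ < ξ₀) (h2 : ξ₂ < θ₂ + α₂) :
    let J : ℝ × ℝ → ℝ := fun n =>
      (θ₁ + α₁) * n.1 + (θ₂ + α₂) * n.2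
        - (1 / 2) * (ξ₁ * n.1 ^ 2 + 2 * ξ₀ * n.1 * n.2 + ξ₂ * n.2 ^ 2)
    let B : Set (ℝ × ℝ) := Set.Icc (0 : ℝ) τ ×ˢ Set.Icc (0 : ℝ) 1
    (((0 : ℝ), (1 : ℝ)) ∈ B ∧ (∀ q ∈ B, J q ≤ J ((0 : ℝ), (1 : ℝ)))) ∧
      ∀ q ∈ B, J q = J ((0 : ℝ), (1 : ℝ)) → q = ((0 : ℝ), (1 : ℝ)) := by
  intro J B
  constructor
  · constructor
    · exact ⟨⟨le_refl 0, hτ.le⟩, ⟨by norm_num, le_refl 1⟩⟩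
    · rintro ⟨x, y⟩ ⟨⟨hx0, hxτ⟩, hy0, hy1⟩
      simp only [J]
      nlinarith [sq_nonneg (ξ₁ * x - ξ₀ * (1 - y)),
        mul_nonneg hdet.le (sq_nonneg (1 - y)),
        mul_nonneg hx0 (sub_pos.2 h1).le,
        mul_nonneg (sub_nonneg.2 hy1) (sub_pos.2 h2).le,
        mul_pos hξ₁ (sub_pos.2 h2)]
  · rintro ⟨x, y⟩ ⟨⟨hx0, hxτ⟩, hy0, hy1⟩ heq
    simp only [J] at heq
    have hx : x ≤ 0 := by
      nlinarith [sq_nonneg (ξ₁ * x - ξ₀ * (1 - y)),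
        mul_nonneg hdet.le (sq_nonneg (1 - y)),
        mul_pos hξ₁ (sub_pos.2 h1),
        mul_nonneg (mul_nonneg hξ₁.le (sub_nonneg.2 hy1)) (sub_pos.2 h2).le]
    have hx : x = 0 := le_antisymm hx hx0
    have hy : 1 ≤ y := by
      nlinarith [sq_nonneg (ξ₁ * x - ξ₀ * (1 - y)),
        mul_nonneg hdet.le (sq_nonneg (1 - y)),
        mul_nonneg (mul_nonneg hξ₁.le hx0) (sub_pos.2 h1).le,
        mul_pos hξ₁ (sub_pos.2 h2)]
    have hy : y = 1 := le_antisymm hy1 hy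
    simp [hx, hy]
end

section
/- (Proposition 1, Region 8.) Under the stated hypotheses, if τξ₁ < θ₁+α₁ and θ₂+α₂ < τξ₀, then (τ, 0) is the unique maximizer of J over the box B = [0,τ] × [0,1]. -/
/-- Proposition 1, Region 8: `(τ,0)` is the unique maximizer of `J` over the box. -/
theorem prop1_region8 (τ θ₁ θ₂ α₁ α₂ ξ₀ ξ₁ ξ₂ : ℝ)
    (hτ : 0 < τ) (hξ₀ : 0 < ξ₀) (hξ₁ : 0 < ξ₁) (hξ₂ : 0 < ξ₂)
    (hdet : 0 < ξ₁ * ξ₂ - ξ₀ ^ 2)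
    (h1 : τ * ξ₁ < θ₁ + α₁) (h2 : θ₂ + α₂ < τ * ξ₀) :
    let J : ℝ × ℝ → ℝ := fun n =>
      (θ₁ + α₁) * n.1 + (θ₂ + α₂) * n.2
        - (1 / 2) * (ξ₁ * n.1 ^ 2 + 2 * ξ₀ * n.1 * n.2 + ξ₂ * n.2 ^ 2)
    let B : Set (ℝ × ℝ) := Set.Icc (0 : ℝ) τ ×ˢ Set.Icc (0 : ℝ) 1
    ((τ, (0 : ℝ)) ∈ B ∧ (∀ q ∈ B, J q ≤ J (τ, (0 : ℝ)))) ∧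
      ∀ q ∈ B, J q = J (τ, (0 : ℝ)) → q = (τ, (0 : ℝ)) := by
  intro J B
  have hQ : ∀ u v : ℝ, 0 ≤ ξ₁ * u ^ 2 - 2 * ξ₀ * u * v + ξ₂ * v ^ 2 := by
    intro u v
    nlinarith [sq_nonneg (ξ₁ * u - ξ₀ * v), mul_nonneg hdet.le (sq_nonneg v), hξ₁]
  constructor
  · constructor
    · exact ⟨⟨le_of_lt hτ, le_refl τ⟩, ⟨le_refl 0, zero_le_one⟩⟩
    · rintro ⟨x, y⟩ ⟨⟨hx0, hxτ⟩, ⟨hy0, hy1⟩⟩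
      simp only [J]
      have ha : 0 ≤ ((θ₁ + α₁) - τ * ξ₁) * (τ - x) :=
        mul_nonneg (by linarith) (by linarith)
      have hb : 0 ≤ (τ * ξ₀ - (θ₂ + α₂)) * y :=
        mul_nonneg (by linarith) hy0
      nlinarith [hQ (τ - x) y]
  · rintro ⟨x, y⟩ ⟨⟨hx0, hxτ⟩, ⟨hy0, hy1⟩⟩ heq
    simp only [J] at heq
    have hQ' := hQ (τ - x) y
    have ha : 0 ≤ ((θ₁ + α₁) - τ * ξ₁) * (τ - x) :=
      mul_nonneg (by linarith) (by linarith)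
    have hb : 0 ≤ (τ * ξ₀ - (θ₂ + α₂)) * y :=
      mul_nonneg (by linarith) hy0
    have hy : y = 0 := by
      by_contra hne
      have hy' : 0 < y := lt_of_le_of_ne hy0 (Ne.symm hne)
      have hb' : 0 < (τ * ξ₀ - (θ₂ + α₂)) * y :=
        mul_pos (by linarith) hy'
      nlinarith
    have hx : x = τ := by
      by_contra hne
      have hx' : x < τ := lt_of_le_of_ne hxτ hne
      have ha' : 0 < ((θ₁ + α₁) - τ * ξ₁) * (τ - x) :=
        mul_pos (by linarith) (by linarith)
      nlinarith
    simp [hx, hy, Prod.ext_iff]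
end

section
/- (Proposition 2, existence and uniqueness.) Under the stated hypotheses, the function J_C attains its maximum over the compact convex set K = {(x,n₁,n₂) ∈ ℝ³ : 0 ≤ x ≤ (1−p)n₂, 0 ≤ n₁ ≤ τ, 0 ≤ n₂ ≤ 1}, and the maximizer is unique: there exists exactly one point (x*, n₁*, n₂*) ∈ K with J_C(x*, n₁*, n₂*) ≥ J_C(x, n₁, n₂) for all (x, n₁, n₂) ∈ K. -/
private lemma qpos_aux (k α₂ ξ₀ ξ₁ ξ₂ : ℝ) (hk : 0 < k) (hα₂ : 0 < α₂)
    (hξ₁ : 0 < ξ₁) (hdet : α₂ * ξ₁ / k < ξ₁ * ξ₂ - ξ₀ ^ 2) (dx d1 d2 : ℝ)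
    (hne : ¬ (dx = 0 ∧ d1 = 0 ∧ d2 = 0)) :
    0 < k * α₂ * dx ^ 2 + ξ₁ * d1 ^ 2 + ξ₂ * d2 ^ 2 + 2 * α₂ * dx * d2
      + 2 * ξ₀ * d1 * d2 := by
  have hdet' : α₂ * ξ₁ < k * (ξ₁ * ξ₂ - ξ₀ ^ 2) := by
    rw [div_lt_iff₀ hk] at hdet; linarith [mul_comm (ξ₁ * ξ₂ - ξ₀ ^ 2) k]
  by_cases h2 : d2 = 0
  · subst h2
    rcases not_and_or.mp hne with h | h
    · nlinarith [sq_pos_of_ne_zero h, sq_nonneg d1, mul_pos hk hα₂]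
    · rcases not_and_or.mp h with h1 | h0
      · nlinarith [sq_pos_of_ne_zero h1, sq_nonneg dx, mul_pos hk hα₂]
      · exact absurd rfl h0
  · have hT1 : 0 ≤ ξ₁ * (k * α₂ * dx + α₂ * d2) ^ 2 :=
      mul_nonneg hξ₁.le (sq_nonneg _)
    have hT2 : 0 ≤ (k * α₂) * (ξ₁ * d1 + ξ₀ * d2) ^ 2 :=
      mul_nonneg (mul_pos hk hα₂).le (sq_nonneg _)
    have hT3 : 0 < (k * (ξ₁ * ξ₂ - ξ₀ ^ 2) - α₂ * ξ₁) * d2 ^ 2 :=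
      mul_pos (by linarith) (sq_pos_of_ne_zero h2)
    nlinarith [mul_pos (mul_pos hk hα₂) hξ₁, hT1, hT2, hT3, mul_pos hk hα₂]

/-- Proposition 2, existence and uniqueness: the controlling shareholder's objective `J_C`
under imperfect investor protection attains its maximum over
`K = {(x,n₁,n₂) : 0 ≤ x ≤ (1−p)n₂, 0 ≤ n₁ ≤ τ, 0 ≤ n₂ ≤ 1}` at exactly one point. -/
theorem prop2_exists_unique (τ k p θ₁ θ₂ α₁ α₂ ξ₀ ξ₁ ξ₂ : ℝ)
    (hτ : 0 < τ) (hk : 0 < k) (hp0 : 0 ≤ p) (hp1 : p < 1)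
    (hα₂ : 0 < α₂) (hξ₀ : 0 < ξ₀) (hξ₁ : 0 < ξ₁) (hξ₂ : 0 < ξ₂)
    (hdet : α₂ * ξ₁ / k < ξ₁ * ξ₂ - ξ₀ ^ 2) :
    let JC : ℝ × ℝ × ℝ → ℝ := fun v =>
      θ₁ * v.2.1 + θ₂ * v.2.2
        - (1 / 2) * (ξ₁ * v.2.1 ^ 2 + 2 * ξ₀ * v.2.1 * v.2.2 + ξ₂ * v.2.2 ^ 2)
        + α₁ * v.2.1 + (1 - v.1) * α₂ * v.2.2 + (v.1 - k * v.1 ^ 2 / 2) * α₂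
    let K : Set (ℝ × ℝ × ℝ) := {v | 0 ≤ v.1 ∧ v.1 ≤ (1 - p) * v.2.2 ∧
      0 ≤ v.2.1 ∧ v.2.1 ≤ τ ∧ 0 ≤ v.2.2 ∧ v.2.2 ≤ 1}
    ∃! a : ℝ × ℝ × ℝ, a ∈ K ∧ ∀ q ∈ K, JC q ≤ JC a := by
  intro JC K
  -- continuity of JC
  have hJC : Continuous JC := by
    simp only [JC]; fun_prop
  -- K is closed
  have hKcl : IsClosed K := by
    have : K = {v : ℝ × ℝ × ℝ | 0 ≤ v.1} ∩ {v | v.1 ≤ (1 - p) * v.2.2} ∩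
        {v | 0 ≤ v.2.1} ∩ {v | v.2.1 ≤ τ} ∩ {v | 0 ≤ v.2.2} ∩ {v | v.2.2 ≤ 1} := by
      ext v; simp [K, Set.mem_setOf_eq]; tauto
    rw [this]
    refine ((((((isClosed_le (by fun_prop) (by fun_prop)).inter
      (isClosed_le (by fun_prop) (by fun_prop))).inter
      (isClosed_le (by fun_prop) (by fun_prop))).inter
      (isClosed_le (by fun_prop) (by fun_prop))).inter
      (isClosed_le (by fun_prop) (by fun_prop))).inter
      (isClosed_le (by fun_prop) (by fun_prop)))
  -- K is compact
  have hKcomp : IsCompact K := by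
    have hsub : K ⊆ Set.Icc ((0 : ℝ), ((0 : ℝ), (0 : ℝ))) ((1 : ℝ), (τ, (1 : ℝ))) := by
      rintro ⟨x, n1, n2⟩ ⟨h1, h2, h3, h4, h5, h6⟩
      refine ⟨⟨h1, h3, h5⟩, ?_, h4, h6⟩
      have : (1 - p) * n2 ≤ 1 := by nlinarith
      exact le_trans h2 this
    exact (isCompact_Icc).of_isClosed_subset hKcl hsub
  have hKne : ((0 : ℝ), ((0 : ℝ), (0 : ℝ))) ∈ K := by
    refine ⟨le_refl _, by norm_num, le_refl _, hτ.le, le_refl _, by norm_num⟩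
  obtain ⟨a, haK, hamax⟩ := hKcomp.exists_isMaxOn ⟨_, hKne⟩ hJC.continuousOn
  refine ⟨a, ⟨haK, fun q hq => hamax hq⟩, ?_⟩
  rintro b ⟨hbK, hbmax⟩
  by_contra hne
  -- midpoint
  set m : ℝ × ℝ × ℝ := ((b.1 + a.1) / 2, ((b.2.1 + a.2.1) / 2, (b.2.2 + a.2.2) / 2)) with hm
  obtain ⟨ha1, ha2, ha3, ha4, ha5, ha6⟩ := haK
  obtain ⟨hb1, hb2, hb3, hb4, hb5, hb6⟩ := hbK
  have hmK : m ∈ K := by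
    refine ⟨by dsimp [m]; linarith, by dsimp [m]; nlinarith, by dsimp [m]; linarith,
      by dsimp [m]; linarith, by dsimp [m]; linarith, by dsimp [m]; linarith⟩
  have heq : JC a = JC b := le_antisymm (hbmax a ⟨ha1, ha2, ha3, ha4, ha5, ha6⟩)
    (hamax ⟨hb1, hb2, hb3, hb4, hb5, hb6⟩)
  have hdne : ¬ (b.1 - a.1 = 0 ∧ b.2.1 - a.2.1 = 0 ∧ b.2.2 - a.2.2 = 0) := by
    rintro ⟨h1, h2, h3⟩
    exact hne (Prod.ext (by linarith) (Prod.ext (by linarith) (by linarith)))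
  have hQ := qpos_aux k α₂ ξ₀ ξ₁ ξ₂ hk hα₂ hξ₁ hdet (b.1 - a.1) (b.2.1 - a.2.1)
    (b.2.2 - a.2.2) hdne
  have hid : JC m = (JC a + JC b) / 2 +
      (1 / 8) * (k * α₂ * (b.1 - a.1) ^ 2 + ξ₁ * (b.2.1 - a.2.1) ^ 2
        + ξ₂ * (b.2.2 - a.2.2) ^ 2 + 2 * α₂ * (b.1 - a.1) * (b.2.2 - a.2.2)
        + 2 * ξ₀ * (b.2.1 - a.2.1) * (b.2.2 - a.2.2)) := by
    simp only [JC, m]; ring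
  have hma : JC m ≤ JC a := hamax hmK
  rw [hid, ← heq] at hma
  linarith
end

section
/- (Proposition 2, Region 1.) Under the stated hypotheses, let c = (1−p)(2 + k(1−p))α₂ and let (η₁, η₂) be the unique solution of the linear system ξ₁η₁ + ξ₀η₂ = θ₁ + α₁, ξ₀η₁ + (ξ₂ + c)η₂ = θ₂ + (2−p)α₂ (i.e. (η₁,η₂) = (ξ + c·e₂₂)^{-1}·(θ₁+α₁, θ₂+(2−p)α₂)). If 0 ≤ η₁ ≤ τ and 0 ≤ η₂ < 1/(1 + (1−p)k), then the point (x*, n₁*, n₂*) = ((1−p)η₂, η₁, η₂) is the unique maximizer of J_C over K. -/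
/-- Proposition 2, Region 1: the point `((1−p)η₂, η₁, η₂)` is the unique maximizer of `J_C` over `K`. -/
theorem prop2_region1 (τ k p θ₁ θ₂ α₁ α₂ ξ₀ ξ₁ ξ₂ : ℝ)
    (hτ : 0 < τ) (hk : 0 < k) (hp0 : 0 ≤ p) (hp1 : p < 1)
    (hα₂ : 0 < α₂) (hξ₀ : 0 < ξ₀) (hξ₁ : 0 < ξ₁) (hξ₂ : 0 < ξ₂)
    (hdet : α₂ * ξ₁ / k < ξ₁ * ξ₂ - ξ₀ ^ 2)
    (c η₁ η₂ : ℝ) (hc : c = (1 - p) * (2 + k * (1 - p)) * α₂)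
    (hsys1 : ξ₁ * η₁ + ξ₀ * η₂ = θ₁ + α₁)
    (hsys2 : ξ₀ * η₁ + (ξ₂ + c) * η₂ = θ₂ + (2 - p) * α₂)
    (h1 : 0 ≤ η₁) (h2 : η₁ ≤ τ) (h3 : 0 ≤ η₂) (h4 : η₂ < 1 / (1 + (1 - p) * k)) :
    let JC : ℝ × ℝ × ℝ → ℝ := fun v =>
      θ₁ * v.2.1 + θ₂ * v.2.2
        - (1 / 2) * (ξ₁ * v.2.1 ^ 2 + 2 * ξ₀ * v.2.1 * v.2.2 + ξ₂ * v.2.2 ^ 2)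
        + α₁ * v.2.1 + (1 - v.1) * α₂ * v.2.2 + (v.1 - k * v.1 ^ 2 / 2) * α₂
    let K : Set (ℝ × ℝ × ℝ) := {v | 0 ≤ v.1 ∧ v.1 ≤ (1 - p) * v.2.2 ∧
      0 ≤ v.2.1 ∧ v.2.1 ≤ τ ∧ 0 ≤ v.2.2 ∧ v.2.2 ≤ 1}
    (((1 - p) * η₂, η₁, η₂) ∈ K ∧ (∀ q ∈ K, JC q ≤ JC ((1 - p) * η₂, η₁, η₂))) ∧
      ∀ q ∈ K, JC q = JC ((1 - p) * η₂, η₁, η₂) → q = ((1 - p) * η₂, η₁, η₂) := by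
  intro JC K
  have hp : 0 < 1 - p := by linarith
  have h5 : 0 < 1 + (1 - p) * k := by nlinarith
  have hη₂1 : η₂ * (1 + (1 - p) * k) < 1 := (lt_div_iff₀ h5).mp h4
  have hη₂lt1 : η₂ < 1 := by nlinarith
  set L : ℝ := α₂ * (1 - (1 + (1 - p) * k) * η₂) with hLdef
  have hL : 0 < L := by rw [hLdef]; nlinarith
  have hdet' : 0 < k * (ξ₁ * ξ₂ - ξ₀ ^ 2) - α₂ * ξ₁ := by
    have := (div_lt_iff₀ hk).mp hdet
    nlinarith
  have hkξ₁ : 0 < k * ξ₁ := mul_pos hk hξ₁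
  have key : ∀ x n₁ n₂ : ℝ,
      2 * k * ξ₁ * (JC ((1 - p) * η₂, η₁, η₂) - JC (x, n₁, n₂) - L * ((1 - p) * n₂ - x)) =
        α₂ * ξ₁ * (k * (x - (1 - p) * η₂) + (n₂ - η₂)) ^ 2
          + k * (ξ₁ * (n₁ - η₁) + ξ₀ * (n₂ - η₂)) ^ 2
          + (k * (ξ₁ * ξ₂ - ξ₀ ^ 2) - α₂ * ξ₁) * (n₂ - η₂) ^ 2 := by
    intro x n₁ n₂
    have hθ₁ : θ₁ = ξ₁ * η₁ + ξ₀ * η₂ - α₁ := by linarith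
    have hθ₂ : θ₂ = ξ₀ * η₁ + (ξ₂ + c) * η₂ - (2 - p) * α₂ := by linarith
    simp only [JC]
    rw [hLdef, hθ₁, hθ₂, hc]
    ring
  have hmem : ((1 - p) * η₂, η₁, η₂) ∈ K := by
    refine ⟨by positivity, le_refl _, h1, h2, h3, le_of_lt hη₂lt1⟩
  clear_value JC L
  have hpos : (0:ℝ) < 2 * k * ξ₁ := by positivity
  refine ⟨⟨hmem, ?_⟩, ?_⟩
  · rintro ⟨x, n₁, n₂⟩ ⟨hx0, hxle, hn10, hn1le, hn20, hn2le⟩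
    have hkey := key x n₁ n₂
    have hs : 0 ≤ (1 - p) * n₂ - x := by linarith
    have hA := mul_nonneg (mul_nonneg hα₂.le hξ₁.le)
      (sq_nonneg (k * (x - (1 - p) * η₂) + (n₂ - η₂)))
    have hB := mul_nonneg hk.le (sq_nonneg (ξ₁ * (n₁ - η₁) + ξ₀ * (n₂ - η₂)))
    have hC := mul_nonneg hdet'.le (sq_nonneg (n₂ - η₂))
    have hR : 0 ≤ α₂ * ξ₁ * (k * (x - (1 - p) * η₂) + (n₂ - η₂)) ^ 2
        + k * (ξ₁ * (n₁ - η₁) + ξ₀ * (n₂ - η₂)) ^ 2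
        + (k * (ξ₁ * ξ₂ - ξ₀ ^ 2) - α₂ * ξ₁) * (n₂ - η₂) ^ 2 := by linarith
    have h7 : 2 * k * ξ₁ * 0 ≤
        2 * k * ξ₁ * (JC ((1 - p) * η₂, η₁, η₂) - JC (x, n₁, n₂) - L * ((1 - p) * n₂ - x)) := by
      rw [mul_zero, hkey]; exact hR
    have h6 := le_of_mul_le_mul_left h7 hpos
    linarith [mul_nonneg hL.le hs]
  · rintro ⟨x, n₁, n₂⟩ ⟨hx0, hxle, hn10, hn1le, hn20, hn2le⟩ heq
    have hkey := key x n₁ n₂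
    rw [heq] at hkey
    have hs : 0 ≤ (1 - p) * n₂ - x := by linarith
    have hA := mul_nonneg (mul_nonneg hα₂.le hξ₁.le)
      (sq_nonneg (k * (x - (1 - p) * η₂) + (n₂ - η₂)))
    have hB := mul_nonneg hk.le (sq_nonneg (ξ₁ * (n₁ - η₁) + ξ₀ * (n₂ - η₂)))
    have hC := mul_nonneg hdet'.le (sq_nonneg (n₂ - η₂))
    have hE : 0 ≤ 2 * k * ξ₁ * (L * ((1 - p) * n₂ - x)) :=
      mul_nonneg hpos.le (mul_nonneg hL.le hs)
    have hzero : α₂ * ξ₁ * (k * (x - (1 - p) * η₂) + (n₂ - η₂)) ^ 2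
        + k * (ξ₁ * (n₁ - η₁) + ξ₀ * (n₂ - η₂)) ^ 2
        + (k * (ξ₁ * ξ₂ - ξ₀ ^ 2) - α₂ * ξ₁) * (n₂ - η₂) ^ 2
        + 2 * k * ξ₁ * (L * ((1 - p) * n₂ - x)) = 0 := by linear_combination -hkey
    have hC0 : (k * (ξ₁ * ξ₂ - ξ₀ ^ 2) - α₂ * ξ₁) * (n₂ - η₂) ^ 2 = 0 := by linarith
    have hn2 : n₂ = η₂ := by
      rcases mul_eq_zero.mp hC0 with h | h
      · exact absurd h (ne_of_gt hdet')
      · have := pow_eq_zero_iff (n := 2) (by norm_num) |>.mp h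
        linarith
    have hB0 : k * (ξ₁ * (n₁ - η₁) + ξ₀ * (n₂ - η₂)) ^ 2 = 0 := by linarith
    have hn1 : n₁ = η₁ := by
      rcases mul_eq_zero.mp hB0 with h | h
      · exact absurd h (ne_of_gt hk)
      · have h' := pow_eq_zero_iff (n := 2) (by norm_num) |>.mp h
        rw [hn2] at h'
        have h'' : ξ₁ * (n₁ - η₁) = 0 := by linarith
        rcases mul_eq_zero.mp h'' with h3 | h3
        · exact absurd h3 (ne_of_gt hξ₁)
        · linarith
    have hE0 : 2 * k * ξ₁ * (L * ((1 - p) * n₂ - x)) = 0 := by linarith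
    have hx : x = (1 - p) * η₂ := by
      rcases mul_eq_zero.mp hE0 with h | h
      · exact absurd h (ne_of_gt hpos)
      · rcases mul_eq_zero.mp h with h' | h'
        · exact absurd h' (ne_of_gt hL)
        · rw [hn2] at h'; linarith
    simp [Prod.ext_iff, hx, hn1, hn2]
end

section
/- (Proposition 2, Region 2.) Under the stated hypotheses, set η₂ = (θ₂ + (2−p)α₂) / (ξ₂ + (1−p)(2 + (1−p)k)α₂). If 0 ≤ η₂ ≤ 1, (θ₁+α₁)/ξ₀ < η₂ and η₂ < 1/(1 + (1−p)k), then the point (x*, n₁*, n₂*) = ((1−p)η₂, 0, η₂) is the unique maximizer of J_C over K. -/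
set_option maxHeartbeats 1000000 in
/-- Proposition 2, Region 2: the point `((1−p)η₂, 0, η₂)` is the unique maximizer of `J_C` over `K`. -/
theorem prop2_region2 (τ k p θ₁ θ₂ α₁ α₂ ξ₀ ξ₁ ξ₂ : ℝ)
    (hτ : 0 < τ) (hk : 0 < k) (hp0 : 0 ≤ p) (hp1 : p < 1)
    (hα₂ : 0 < α₂) (hξ₀ : 0 < ξ₀) (hξ₁ : 0 < ξ₁) (hξ₂ : 0 < ξ₂)
    (hdet : α₂ * ξ₁ / k < ξ₁ * ξ₂ - ξ₀ ^ 2)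
    (η₂ : ℝ) (hη₂ : η₂ = (θ₂ + (2 - p) * α₂) / (ξ₂ + (1 - p) * (2 + (1 - p) * k) * α₂))
    (h1 : 0 ≤ η₂) (h2 : η₂ ≤ 1) (h3 : (θ₁ + α₁) / ξ₀ < η₂)
    (h4 : η₂ < 1 / (1 + (1 - p) * k)) :
    let JC : ℝ × ℝ × ℝ → ℝ := fun v =>
      θ₁ * v.2.1 + θ₂ * v.2.2
        - (1 / 2) * (ξ₁ * v.2.1 ^ 2 + 2 * ξ₀ * v.2.1 * v.2.2 + ξ₂ * v.2.2 ^ 2)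
        + α₁ * v.2.1 + (1 - v.1) * α₂ * v.2.2 + (v.1 - k * v.1 ^ 2 / 2) * α₂
    let K : Set (ℝ × ℝ × ℝ) := {v | 0 ≤ v.1 ∧ v.1 ≤ (1 - p) * v.2.2 ∧
      0 ≤ v.2.1 ∧ v.2.1 ≤ τ ∧ 0 ≤ v.2.2 ∧ v.2.2 ≤ 1}
    (((1 - p) * η₂, (0 : ℝ), η₂) ∈ K ∧ (∀ q ∈ K, JC q ≤ JC ((1 - p) * η₂, (0 : ℝ), η₂))) ∧
      ∀ q ∈ K, JC q = JC ((1 - p) * η₂, (0 : ℝ), η₂) → q = ((1 - p) * η₂, (0 : ℝ), η₂) := by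
  intro JC K
  have hp : (0:ℝ) < 1 - p := by linarith
  have hD : (0:ℝ) < ξ₂ + (1 - p) * (2 + (1 - p) * k) * α₂ := by positivity
  -- rewrite θ₂
  have hθ₂ : θ₂ = η₂ * (ξ₂ + (1 - p) * (2 + (1 - p) * k) * α₂) - (2 - p) * α₂ := by
    field_simp at hη₂
    linarith [hη₂]
  -- multipliers
  have hden : (0:ℝ) < 1 + (1 - p) * k := by positivity
  have hlam : 0 < α₂ * (1 - (1 + (1 - p) * k) * η₂) := by
    have : η₂ * (1 + (1 - p) * k) < 1 := by
      rw [lt_div_iff₀ hden] at h4; linarith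
    nlinarith
  have hmu : 0 < ξ₀ * η₂ - (θ₁ + α₁) := by
    rw [div_lt_iff₀ hξ₀] at h3; linarith
  have hdet' : 0 < k * (ξ₁ * ξ₂ - ξ₀ ^ 2) - α₂ * ξ₁ := by
    rw [div_lt_iff₀ hk] at hdet; linarith
  -- SOS certificate for the quadratic form
  have cert : ∀ a b c : ℝ,
      k ^ 2 * ξ₁ * (ξ₁ * b ^ 2 + 2 * ξ₀ * b * c + ξ₂ * c ^ 2 + 2 * α₂ * a * c + k * α₂ * a ^ 2)
        = k * ξ₁ * α₂ * (k * a + c) ^ 2 + (k * ξ₁ * b + k * ξ₀ * c) ^ 2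
          + (k * (k * (ξ₁ * ξ₂ - ξ₀ ^ 2) - α₂ * ξ₁)) * c ^ 2 := by
    intro a b c; ring
  have quad : ∀ a b c : ℝ,
      0 ≤ ξ₁ * b ^ 2 + 2 * ξ₀ * b * c + ξ₂ * c ^ 2 + 2 * α₂ * a * c + k * α₂ * a ^ 2 := by
    intro a b c
    have h := cert a b c
    have hk2 : (0:ℝ) < k ^ 2 * ξ₁ := by positivity
    nlinarith [h, sq_nonneg (k * a + c), sq_nonneg (k * ξ₁ * b + k * ξ₀ * c), sq_nonneg c,
      mul_pos hk hdet', mul_pos (mul_pos hk hξ₁) hα₂,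
      mul_nonneg (mul_nonneg (mul_nonneg hk.le hξ₁.le) hα₂.le) (sq_nonneg (k * a + c)),
      mul_nonneg (mul_pos hk hdet').le (sq_nonneg c)]
  have zero : ∀ a b c : ℝ,
      ξ₁ * b ^ 2 + 2 * ξ₀ * b * c + ξ₂ * c ^ 2 + 2 * α₂ * a * c + k * α₂ * a ^ 2 ≤ 0 →
      a = 0 ∧ b = 0 ∧ c = 0 := by
    intro a b c hE
    have h := cert a b c
    have hE' : k ^ 2 * ξ₁ * (ξ₁ * b ^ 2 + 2 * ξ₀ * b * c + ξ₂ * c ^ 2 + 2 * α₂ * a * c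
        + k * α₂ * a ^ 2) ≤ 0 :=
      mul_nonpos_of_nonneg_of_nonpos (by positivity) hE
    have hc2 : c ^ 2 = 0 := le_antisymm (by
        nlinarith [hE', sq_nonneg (k * a + c), sq_nonneg (k * ξ₁ * b + k * ξ₀ * c),
          mul_nonneg (mul_nonneg (mul_nonneg hk.le hξ₁.le) hα₂.le) (sq_nonneg (k * a + c)),
          mul_pos hk hdet', mul_pos (mul_pos hk hξ₁) hα₂]) (sq_nonneg c)
    have hc : c = 0 := by
      have := sq_eq_zero_iff.mp hc2; exact this
    subst hc
    have hb2 : (k * ξ₁ * b) ^ 2 = 0 := le_antisymm (by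
        nlinarith [sq_nonneg (k * a), mul_pos (mul_pos hk hξ₁) hα₂]) (sq_nonneg _)
    have hb : b = 0 := by
      have h0 := sq_eq_zero_iff.mp hb2
      have : k * ξ₁ ≠ 0 := by positivity
      rcases mul_eq_zero.mp h0 with h' | h'
      · exact absurd h' this
      · exact h'
    subst hb
    have ha2 : (k * a) ^ 2 = 0 := le_antisymm (by
        nlinarith [mul_pos (mul_pos hk hξ₁) hα₂]) (sq_nonneg _)
    have ha : a = 0 := by
      have h0 := sq_eq_zero_iff.mp ha2
      rcases mul_eq_zero.mp h0 with h' | h'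
      · exact absurd h' hk.ne'
      · exact h'
    exact ⟨ha, rfl, rfl⟩
  constructor
  · constructor
    · refine ⟨by positivity, le_refl _, le_refl _, hτ.le, h1, h2⟩
    · rintro ⟨x, n₁, n₂⟩ ⟨hx0, hx1, hn10, hn1τ, hn20, hn21⟩
      simp only at hx0 hx1 hn10 hn1τ hn20 hn21
      have hq := quad (x - (1 - p) * η₂) n₁ (n₂ - η₂)
      have t1 : 0 ≤ (ξ₀ * η₂ - (θ₁ + α₁)) * n₁ := mul_nonneg hmu.le hn10
      have t2 : 0 ≤ (α₂ * (1 - (1 + (1 - p) * k) * η₂)) * ((1 - p) * n₂ - x) :=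
        mul_nonneg hlam.le (by linarith)
      show JC (x, n₁, n₂) ≤ JC ((1 - p) * η₂, 0, η₂)
      simp only [JC]
      rw [hθ₂]
      nlinarith [t1, t2, hq]
  · rintro ⟨x, n₁, n₂⟩ ⟨hx0, hx1, hn10, hn1τ, hn20, hn21⟩ heq
    simp only at hx0 hx1 hn10 hn1τ hn20 hn21
    simp only [JC] at heq
    rw [hθ₂] at heq
    have t1 : 0 ≤ (ξ₀ * η₂ - (θ₁ + α₁)) * n₁ := mul_nonneg hmu.le hn10
    have t2 : 0 ≤ (α₂ * (1 - (1 + (1 - p) * k) * η₂)) * ((1 - p) * n₂ - x) :=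
      mul_nonneg hlam.le (by linarith)
    have hE : ξ₁ * n₁ ^ 2 + 2 * ξ₀ * n₁ * (n₂ - η₂) + ξ₂ * (n₂ - η₂) ^ 2
        + 2 * α₂ * (x - (1 - p) * η₂) * (n₂ - η₂) + k * α₂ * (x - (1 - p) * η₂) ^ 2 ≤ 0 := by
      nlinarith [t1, t2, heq]
    obtain ⟨ha, hb, hc⟩ := zero (x - (1 - p) * η₂) n₁ (n₂ - η₂) hE
    have hx : x = (1 - p) * η₂ := by linarith
    have hn2 : n₂ = η₂ := by linarith
    simp [hx, hb, hn2]
end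

section
/- (Proposition 2, Region 3.) Under the stated hypotheses, set η₂ = (θ₂ + (2−p)α₂ − τξ₀) / (ξ₂ + (1−p)(2 + (1−p)k)α₂). If 0 ≤ η₂ < 1/(1 + (1−p)k) and η₂ < (θ₁ + α₁ − τξ₁)/ξ₀, then the point (x*, n₁*, n₂*) = ((1−p)η₂, τ, η₂) is the unique maximizer of J_C over K. -/
set_option maxHeartbeats 1000000

/-- Proposition 2, Region 3: the point `((1−p)η₂, τ, η₂)` is the unique maximizer of `J_C` over `K`. -/
theorem prop2_region3 (τ k p θ₁ θ₂ α₁ α₂ ξ₀ ξ₁ ξ₂ : ℝ)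
    (hτ : 0 < τ) (hk : 0 < k) (hp0 : 0 ≤ p) (hp1 : p < 1)
    (hα₂ : 0 < α₂) (hξ₀ : 0 < ξ₀) (hξ₁ : 0 < ξ₁) (hξ₂ : 0 < ξ₂)
    (hdet : α₂ * ξ₁ / k < ξ₁ * ξ₂ - ξ₀ ^ 2)
    (η₂ : ℝ) (hη₂ : η₂ = (θ₂ + (2 - p) * α₂ - τ * ξ₀) / (ξ₂ + (1 - p) * (2 + (1 - p) * k) * α₂))
    (h1 : 0 ≤ η₂) (h2 : η₂ < 1 / (1 + (1 - p) * k))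
    (h3 : η₂ < (θ₁ + α₁ - τ * ξ₁) / ξ₀) :
    let JC : ℝ × ℝ × ℝ → ℝ := fun v =>
      θ₁ * v.2.1 + θ₂ * v.2.2
        - (1 / 2) * (ξ₁ * v.2.1 ^ 2 + 2 * ξ₀ * v.2.1 * v.2.2 + ξ₂ * v.2.2 ^ 2)
        + α₁ * v.2.1 + (1 - v.1) * α₂ * v.2.2 + (v.1 - k * v.1 ^ 2 / 2) * α₂
    let K : Set (ℝ × ℝ × ℝ) := {v | 0 ≤ v.1 ∧ v.1 ≤ (1 - p) * v.2.2 ∧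
      0 ≤ v.2.1 ∧ v.2.1 ≤ τ ∧ 0 ≤ v.2.2 ∧ v.2.2 ≤ 1}
    (((1 - p) * η₂, τ, η₂) ∈ K ∧ (∀ q ∈ K, JC q ≤ JC ((1 - p) * η₂, τ, η₂))) ∧
      ∀ q ∈ K, JC q = JC ((1 - p) * η₂, τ, η₂) → q = ((1 - p) * η₂, τ, η₂) := by
  intro JC K
  have hp : 0 < 1 - p := by linarith
  have hD : 0 < 1 + (1 - p) * k := by nlinarith
  have hA : 0 < ξ₂ + (1 - p) * (2 + (1 - p) * k) * α₂ := by
    have h' : 0 < (1 - p) * ((2 + (1 - p) * k) * α₂) :=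
      mul_pos hp (mul_pos (by nlinarith) hα₂)
    nlinarith
  -- stationarity identity
  have hst : (ξ₂ + (1 - p) * (2 + (1 - p) * k) * α₂) * η₂ = θ₂ + (2 - p) * α₂ - τ * ξ₀ := by
    rw [hη₂]; field_simp
  -- positive constants
  have hc₁ : 0 < θ₁ + α₁ - ξ₁ * τ - ξ₀ * η₂ := by
    rw [lt_div_iff₀ hξ₀] at h3; nlinarith
  have hcx : 0 < α₂ * (1 - (1 + (1 - p) * k) * η₂) := by
    rw [lt_div_iff₀ hD] at h2; nlinarith
  have hE : 0 < ξ₂ - α₂ / k - ξ₀ ^ 2 / ξ₁ := by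
    rw [div_lt_iff₀ hk] at hdet
    rw [show ξ₂ - α₂ / k - ξ₀ ^ 2 / ξ₁ = (k * (ξ₁ * ξ₂ - ξ₀ ^ 2) - α₂ * ξ₁) / (k * ξ₁) by
      field_simp; ring]
    apply div_pos (by nlinarith) (by positivity)
  have hη1 : η₂ < 1 := by
    rw [lt_div_iff₀ hD] at h2; nlinarith
  have hmem : ((1 - p) * η₂, τ, η₂) ∈ K := by
    refine ⟨by positivity, le_refl _, le_of_lt hτ, le_refl _, h1, le_of_lt hη1⟩
  -- key decomposition
  have key : ∀ x n₁ n₂ : ℝ,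
      JC ((1 - p) * η₂, τ, η₂) - JC (x, n₁, n₂) =
        (θ₁ + α₁ - ξ₁ * τ - ξ₀ * η₂) * (τ - n₁)
        + (α₂ * (1 - (1 + (1 - p) * k) * η₂)) * ((1 - p) * n₂ - x)
        + (k * α₂ / 2) * ((x - (1 - p) * η₂) + (n₂ - η₂) / k) ^ 2
        + (ξ₁ / 2) * ((n₁ - τ) + ξ₀ * (n₂ - η₂) / ξ₁) ^ 2
        + ((ξ₂ - α₂ / k - ξ₀ ^ 2 / ξ₁) / 2) * (n₂ - η₂) ^ 2 := by
    intro x n₁ n₂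
    simp only [JC]
    have hk' : (k : ℝ) ≠ 0 := ne_of_gt hk
    have hξ₁' : (ξ₁ : ℝ) ≠ 0 := ne_of_gt hξ₁
    field_simp
    linear_combination (n₂ - η₂) * (2 * k * ξ₁) * hst
  set X := ξ₂ - α₂ / k - ξ₀ ^ 2 / ξ₁ with hX
  have sq1 : ∀ x n₁ n₂ : ℝ, 0 ≤ (k * α₂ / 2) * ((x - (1 - p) * η₂) + (n₂ - η₂) / k) ^ 2 := by
    intro x n₁ n₂; positivity
  have sq2 : ∀ n₁ n₂ : ℝ, 0 ≤ (ξ₁ / 2) * ((n₁ - τ) + ξ₀ * (n₂ - η₂) / ξ₁) ^ 2 := by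
    intro n₁ n₂; positivity
  have sq3 : ∀ n₂ : ℝ, 0 ≤ (X / 2) * (n₂ - η₂) ^ 2 := by
    intro n₂; positivity
  constructor
  · refine ⟨hmem, ?_⟩
    rintro ⟨x, n₁, n₂⟩ ⟨hx0, hx2, hn10, hn11, hn20, hn21⟩
    have hkey := key x n₁ n₂
    have T1 : 0 ≤ (θ₁ + α₁ - ξ₁ * τ - ξ₀ * η₂) * (τ - n₁) :=
      mul_nonneg hc₁.le (by linarith)
    have T2 : 0 ≤ (α₂ * (1 - (1 + (1 - p) * k) * η₂)) * ((1 - p) * n₂ - x) :=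
      mul_nonneg hcx.le (by linarith)
    have S1 := sq1 x n₁ n₂; have S2 := sq2 n₁ n₂; have S3 := sq3 n₂
    have : (0:ℝ) ≤ JC ((1 - p) * η₂, τ, η₂) - JC (x, n₁, n₂) := by rw [hkey]; linarith
    linarith
  · rintro ⟨x, n₁, n₂⟩ ⟨hx0, hx2, hn10, hn11, hn20, hn21⟩ heq
    have hkey := key x n₁ n₂
    rw [heq, sub_self] at hkey
    replace hkey := hkey.symm
    simp only [Set.mem_setOf_eq] at hx2 hn11 hn20
    have T1 : 0 ≤ (θ₁ + α₁ - ξ₁ * τ - ξ₀ * η₂) * (τ - n₁) :=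
      mul_nonneg hc₁.le (by linarith)
    have T2 : 0 ≤ (α₂ * (1 - (1 + (1 - p) * k) * η₂)) * ((1 - p) * n₂ - x) :=
      mul_nonneg hcx.le (by linarith)
    have S1 := sq1 x n₁ n₂; have S2 := sq2 n₁ n₂; have S3 := sq3 n₂
    have e5 : (X / 2) * (n₂ - η₂) ^ 2 = 0 := by linarith
    have hX2 : (0:ℝ) < X / 2 := by positivity
    have hn2 : n₂ = η₂ := by
      have h0 := (mul_eq_zero.mp e5).resolve_left (ne_of_gt hX2)
      have := pow_eq_zero_iff (n := 2) (by norm_num) |>.mp h0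
      linarith
    have hk2 : (θ₁ + α₁ - ξ₁ * τ - ξ₀ * η₂) * (τ - n₁)
        + (α₂ * (1 - (1 + (1 - p) * k) * η₂)) * ((1 - p) * n₂ - x)
        + (k * α₂ / 2) * (x - (1 - p) * η₂) ^ 2
        + (ξ₁ / 2) * (n₁ - τ) ^ 2 = 0 := by
      rw [hn2] at hkey ⊢
      linear_combination hkey
    have Q1 : 0 ≤ (k * α₂ / 2) * (x - (1 - p) * η₂) ^ 2 := by positivity
    have Q2 : 0 ≤ (ξ₁ / 2) * (n₁ - τ) ^ 2 := by positivity
    have hn1 : n₁ = τ := by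
      have e4 : (ξ₁ / 2) * (n₁ - τ) ^ 2 = 0 := by linarith
      have h0 := (mul_eq_zero.mp e4).resolve_left (by positivity)
      have := pow_eq_zero_iff (n := 2) (by norm_num) |>.mp h0
      linarith
    have hx : x = (1 - p) * η₂ := by
      have e3 : (k * α₂ / 2) * (x - (1 - p) * η₂) ^ 2 = 0 := by linarith
      have h0 := (mul_eq_zero.mp e3).resolve_left (by positivity)
      have := pow_eq_zero_iff (n := 2) (by norm_num) |>.mp h0
      linarith
    rw [Prod.ext_iff, Prod.ext_iff]
    exact ⟨hx, hn1, hn2⟩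
end

section
/- (Proposition 2, Region 10.) Under the stated hypotheses, note that ξ₁(ξ₂ − α₂/k) − ξ₀² > 0, and let (η₁, η₂) be the unique solution of the linear system ξ₁η₁ + ξ₀η₂ = θ₁ + α₁, ξ₀η₁ + (ξ₂ − α₂/k)η₂ = θ₂ + (1 − 1/k)α₂ (i.e. (η₁,η₂) = (ξ − (α₂/k)·e₂₂)^{-1}·(θ₁+α₁, θ₂+(1−1/k)α₂)). If 0 ≤ η₁ ≤ τ and 1/(1 + (1−p)k) ≤ η₂ ≤ 1, then the point (x*, n₁*, n₂*) = ((1 − η₂)/k, η₁, η₂) is the unique maximizer of J_C over K. -/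
/-- Positivity of the quadratic form. -/
lemma quad_nonneg (k α₂ ξ₀ ξ₁ ξ₂ a b c : ℝ) (hk : 0 < k) (hα₂ : 0 < α₂)
    (hξ₁ : 0 < ξ₁) (hD : 0 < ξ₁ * (ξ₂ - α₂ / k) - ξ₀ ^ 2) :
    0 ≤ k * α₂ * a ^ 2 + 2 * α₂ * a * c + ξ₁ * b ^ 2 + 2 * ξ₀ * b * c + ξ₂ * c ^ 2 := by
  have hk' : (k : ℝ) ≠ 0 := hk.ne'
  have hD' : 0 < ξ₁ * ξ₂ * k - ξ₀ ^ 2 * k - ξ₁ * α₂ := by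
    have h := mul_pos hD hk
    have e : (ξ₁ * (ξ₂ - α₂ / k) - ξ₀ ^ 2) * k = ξ₁ * ξ₂ * k - ξ₀ ^ 2 * k - ξ₁ * α₂ := by
      field_simp; ring
    linarith [e ▸ h]
  have key : k * ξ₁ * (k * α₂ * a ^ 2 + 2 * α₂ * a * c + ξ₁ * b ^ 2 + 2 * ξ₀ * b * c + ξ₂ * c ^ 2)
      = ξ₁ * α₂ * (k * a + c) ^ 2 + k * (ξ₁ * b + ξ₀ * c) ^ 2
        + (ξ₁ * ξ₂ * k - ξ₀ ^ 2 * k - ξ₁ * α₂) * c ^ 2 := by ring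
  by_contra h
  push_neg at h
  nlinarith [key, mul_pos (mul_pos hk hξ₁) (neg_pos.mpr h),
    mul_nonneg (mul_pos hξ₁ hα₂).le (sq_nonneg (k * a + c)),
    mul_nonneg hk.le (sq_nonneg (ξ₁ * b + ξ₀ * c)),
    mul_nonneg hD'.le (sq_nonneg c)]

/-- Definiteness: zero value forces zero vector. -/
lemma quad_def (k α₂ ξ₀ ξ₁ ξ₂ a b c : ℝ) (hk : 0 < k) (hα₂ : 0 < α₂)
    (hξ₁ : 0 < ξ₁) (hD : 0 < ξ₁ * (ξ₂ - α₂ / k) - ξ₀ ^ 2)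
    (h0 : k * α₂ * a ^ 2 + 2 * α₂ * a * c + ξ₁ * b ^ 2 + 2 * ξ₀ * b * c + ξ₂ * c ^ 2 = 0) :
    a = 0 ∧ b = 0 ∧ c = 0 := by
  have hD' : 0 < ξ₁ * ξ₂ * k - ξ₀ ^ 2 * k - ξ₁ * α₂ := by
    have h := mul_pos hD hk
    have e : (ξ₁ * (ξ₂ - α₂ / k) - ξ₀ ^ 2) * k = ξ₁ * ξ₂ * k - ξ₀ ^ 2 * k - ξ₁ * α₂ := by
      field_simp; ring
    linarith [e ▸ h]
  have key : k * ξ₁ * (k * α₂ * a ^ 2 + 2 * α₂ * a * c + ξ₁ * b ^ 2 + 2 * ξ₀ * b * c + ξ₂ * c ^ 2)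
      = ξ₁ * α₂ * (k * a + c) ^ 2 + k * (ξ₁ * b + ξ₀ * c) ^ 2
        + (ξ₁ * ξ₂ * k - ξ₀ ^ 2 * k - ξ₁ * α₂) * c ^ 2 := by ring
  have hc : c = 0 := by
    have hc2 : c ^ 2 ≤ 0 := by
      by_contra hcc
      push_neg at hcc
      have hz : k * ξ₁ * (k * α₂ * a ^ 2 + 2 * α₂ * a * c + ξ₁ * b ^ 2
          + 2 * ξ₀ * b * c + ξ₂ * c ^ 2) = 0 := by rw [h0]; ring
      nlinarith [key, hz, mul_nonneg (mul_pos hξ₁ hα₂).le (sq_nonneg (k * a + c)),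
        mul_nonneg hk.le (sq_nonneg (ξ₁ * b + ξ₀ * c)), mul_pos hD' hcc]
    have := sq_nonneg c
    have : c ^ 2 = 0 := le_antisymm hc2 this
    exact pow_eq_zero_iff (two_ne_zero) |>.mp this
  subst hc
  have hb : b = 0 := by
    have hb2 : b ^ 2 ≤ 0 := by nlinarith [mul_nonneg (mul_pos hk hα₂).le (sq_nonneg a)]
    have : b ^ 2 = 0 := le_antisymm hb2 (sq_nonneg b)
    exact pow_eq_zero_iff (two_ne_zero) |>.mp this
  subst hb
  have ha : a = 0 := by
    have ha2 : a ^ 2 ≤ 0 := by nlinarith [mul_pos hk hα₂]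
    have : a ^ 2 = 0 := le_antisymm ha2 (sq_nonneg a)
    exact pow_eq_zero_iff (two_ne_zero) |>.mp this
  exact ⟨ha, rfl, rfl⟩

/-- Proposition 2, Region 10: `ξ₁(ξ₂ − α₂/k) − ξ₀² > 0`, and the point `((1−η₂)/k, η₁, η₂)` is the unique maximizer of `J_C` over `K`. -/
theorem prop2_region10 (τ k p θ₁ θ₂ α₁ α₂ ξ₀ ξ₁ ξ₂ : ℝ)
    (hτ : 0 < τ) (hk : 0 < k) (hp0 : 0 ≤ p) (hp1 : p < 1)
    (hα₂ : 0 < α₂) (hξ₀ : 0 < ξ₀) (hξ₁ : 0 < ξ₁) (hξ₂ : 0 < ξ₂)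
    (hdet : α₂ * ξ₁ / k < ξ₁ * ξ₂ - ξ₀ ^ 2)
    (η₁ η₂ : ℝ)
    (hsys1 : ξ₁ * η₁ + ξ₀ * η₂ = θ₁ + α₁)
    (hsys2 : ξ₀ * η₁ + (ξ₂ - α₂ / k) * η₂ = θ₂ + (1 - 1 / k) * α₂)
    (h1 : 0 ≤ η₁) (h2 : η₁ ≤ τ)
    (h3 : 1 / (1 + (1 - p) * k) ≤ η₂) (h4 : η₂ ≤ 1) :
    let JC : ℝ × ℝ × ℝ → ℝ := fun v =>
      θ₁ * v.2.1 + θ₂ * v.2.2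
        - (1 / 2) * (ξ₁ * v.2.1 ^ 2 + 2 * ξ₀ * v.2.1 * v.2.2 + ξ₂ * v.2.2 ^ 2)
        + α₁ * v.2.1 + (1 - v.1) * α₂ * v.2.2 + (v.1 - k * v.1 ^ 2 / 2) * α₂
    let K : Set (ℝ × ℝ × ℝ) := {v | 0 ≤ v.1 ∧ v.1 ≤ (1 - p) * v.2.2 ∧
      0 ≤ v.2.1 ∧ v.2.1 ≤ τ ∧ 0 ≤ v.2.2 ∧ v.2.2 ≤ 1}
    0 < ξ₁ * (ξ₂ - α₂ / k) - ξ₀ ^ 2 ∧ (((1 - η₂) / k, η₁, η₂) ∈ K ∧ (∀ q ∈ K, JC q ≤ JC ((1 - η₂) / k, η₁, η₂))) ∧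
      ∀ q ∈ K, JC q = JC ((1 - η₂) / k, η₁, η₂) → q = ((1 - η₂) / k, η₁, η₂) := by
  intro JC K
  have hk' : (k : ℝ) ≠ 0 := hk.ne'
  have hD : 0 < ξ₁ * (ξ₂ - α₂ / k) - ξ₀ ^ 2 := by
    have : ξ₁ * (ξ₂ - α₂ / k) - ξ₀ ^ 2 = ξ₁ * ξ₂ - ξ₀ ^ 2 - α₂ * ξ₁ / k := by
      field_simp; ring
    rw [this]; linarith
  set x₀ : ℝ := (1 - η₂) / k with hx₀def
  have hx0 : k * x₀ = 1 - η₂ := by rw [hx₀def]; field_simp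
  have hsys2' : ξ₀ * η₁ + ξ₂ * η₂ = θ₂ + (1 - x₀) * α₂ := by
    have h := hsys2
    field_simp at h
    have : k * (ξ₀ * η₁ + ξ₂ * η₂) = k * (θ₂ + (1 - x₀) * α₂) := by
      linear_combination h + α₂ * hx0
    exact mul_left_cancel₀ hk' this
  -- positivity of 1 + (1-p)k and positivity of η₂
  have hpk : 0 < 1 + (1 - p) * k := by nlinarith
  have hη₂pos : 0 < η₂ := lt_of_lt_of_le (by positivity) h3
  -- membership
  have hmem : ((x₀, η₁, η₂) : ℝ × ℝ × ℝ) ∈ K := by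
    refine ⟨?_, ?_, h1, h2, hη₂pos.le, h4⟩
    · exact div_nonneg (by linarith) hk.le
    · have h3' : 1 ≤ η₂ * (1 + (1 - p) * k) := (div_le_iff₀ hpk).mp h3
      rw [hx₀def, div_le_iff₀ hk]
      nlinarith
  -- key identity
  have hident : ∀ x n₁ n₂ : ℝ, JC (x₀, η₁, η₂) - JC (x, n₁, n₂)
      = (1 / 2) * (k * α₂ * (x₀ - x) ^ 2 + 2 * α₂ * (x₀ - x) * (η₂ - n₂)
        + ξ₁ * (η₁ - n₁) ^ 2 + 2 * ξ₀ * (η₁ - n₁) * (η₂ - n₂) + ξ₂ * (η₂ - n₂) ^ 2) := by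
    intro x n₁ n₂
    show (θ₁ * η₁ + θ₂ * η₂ - (1/2) * (ξ₁ * η₁ ^ 2 + 2 * ξ₀ * η₁ * η₂ + ξ₂ * η₂ ^ 2)
        + α₁ * η₁ + (1 - x₀) * α₂ * η₂ + (x₀ - k * x₀ ^ 2 / 2) * α₂)
      - (θ₁ * n₁ + θ₂ * n₂ - (1/2) * (ξ₁ * n₁ ^ 2 + 2 * ξ₀ * n₁ * n₂ + ξ₂ * n₂ ^ 2)
        + α₁ * n₁ + (1 - x) * α₂ * n₂ + (x - k * x ^ 2 / 2) * α₂) = _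
    linear_combination (n₁ - η₁) * hsys1 + (n₂ - η₂) * hsys2' + α₂ * (x - x₀) * hx0
  clear_value x₀
  refine ⟨hD, ⟨hmem, ?_⟩, ?_⟩
  · rintro ⟨x, n₁, n₂⟩ hq
    have hid := hident x n₁ n₂
    have hQ := quad_nonneg k α₂ ξ₀ ξ₁ ξ₂ (x₀ - x) (η₁ - n₁) (η₂ - n₂) hk hα₂ hξ₁ hD
    clear_value JC
    linarith
  · rintro ⟨x, n₁, n₂⟩ hq heq
    have hid := hident x n₁ n₂
    clear_value JC
    rw [heq] at hid
    have h0 : k * α₂ * (x₀ - x) ^ 2 + 2 * α₂ * (x₀ - x) * (η₂ - n₂)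
        + ξ₁ * (η₁ - n₁) ^ 2 + 2 * ξ₀ * (η₁ - n₁) * (η₂ - n₂) + ξ₂ * (η₂ - n₂) ^ 2 = 0 := by
      linarith
    obtain ⟨ha, hb, hc⟩ := quad_def k α₂ ξ₀ ξ₁ ξ₂ (x₀ - x) (η₁ - n₁) (η₂ - n₂) hk hα₂ hξ₁ hD h0
    have : x = x₀ := by linarith
    have h1' : n₁ = η₁ := by linarith
    have h2' : n₂ = η₂ := by linarith
    simp [this, h1', h2']
end

section
/- (Proposition 2, Region 11.) Under the stated hypotheses, note that ξ₂ − α₂/k > 0, and set η₂ = (θ₂ + (1 − 1/k)α₂) / (ξ₂ − α₂/k). If 1/(1 + (1−p)k) ≤ η₂ ≤ 1 and η₂ > (θ₁ + α₁)/ξ₀, then the point (x*, n₁*, n₂*) = ((1 − η₂)/k, 0, η₂) is the unique maximizer of J_C over K. -/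
set_option maxHeartbeats 1600000 in
/-- Proposition 2, Region 11: `ξ₂ − α₂/k > 0`, and the point `((1−η₂)/k, 0, η₂)` is the unique maximizer of `J_C` over `K`. -/
theorem prop2_region11 (τ k p θ₁ θ₂ α₁ α₂ ξ₀ ξ₁ ξ₂ : ℝ)
    (hτ : 0 < τ) (hk : 0 < k) (hp0 : 0 ≤ p) (hp1 : p < 1)
    (hα₂ : 0 < α₂) (hξ₀ : 0 < ξ₀) (hξ₁ : 0 < ξ₁) (hξ₂ : 0 < ξ₂)
    (hdet : α₂ * ξ₁ / k < ξ₁ * ξ₂ - ξ₀ ^ 2)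
    (η₂ : ℝ) (hη₂ : η₂ = (θ₂ + (1 - 1 / k) * α₂) / (ξ₂ - α₂ / k))
    (h1 : 1 / (1 + (1 - p) * k) ≤ η₂) (h2 : η₂ ≤ 1) (h3 : (θ₁ + α₁) / ξ₀ < η₂) :
    let JC : ℝ × ℝ × ℝ → ℝ := fun v =>
      θ₁ * v.2.1 + θ₂ * v.2.2
        - (1 / 2) * (ξ₁ * v.2.1 ^ 2 + 2 * ξ₀ * v.2.1 * v.2.2 + ξ₂ * v.2.2 ^ 2)
        + α₁ * v.2.1 + (1 - v.1) * α₂ * v.2.2 + (v.1 - k * v.1 ^ 2 / 2) * α₂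
    let K : Set (ℝ × ℝ × ℝ) := {v | 0 ≤ v.1 ∧ v.1 ≤ (1 - p) * v.2.2 ∧
      0 ≤ v.2.1 ∧ v.2.1 ≤ τ ∧ 0 ≤ v.2.2 ∧ v.2.2 ≤ 1}
    0 < ξ₂ - α₂ / k ∧ (((1 - η₂) / k, (0 : ℝ), η₂) ∈ K ∧ (∀ q ∈ K, JC q ≤ JC ((1 - η₂) / k, (0 : ℝ), η₂))) ∧
      ∀ q ∈ K, JC q = JC ((1 - η₂) / k, (0 : ℝ), η₂) → q = ((1 - η₂) / k, (0 : ℝ), η₂) := by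
  intro JC K
  have hk0 : k ≠ 0 := ne_of_gt hk
  have hξ10 : ξ₁ ≠ 0 := ne_of_gt hξ₁
  have hdet' : α₂ * ξ₁ < (ξ₁ * ξ₂ - ξ₀ ^ 2) * k := (div_lt_iff₀ hk).1 hdet
  have hA : 0 < ξ₂ - α₂ / k := by
    have h : α₂ < ξ₂ * k := by nlinarith [mul_pos (mul_pos hξ₀ hξ₀) hk]
    have := (div_lt_iff₀ hk).2 h
    linarith
  have hA0 : ξ₂ - α₂ / k ≠ 0 := ne_of_gt hA
  have hc : 0 < ξ₂ - α₂ / k - ξ₀ ^ 2 / ξ₁ := by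
    have h : ξ₀ ^ 2 / ξ₁ + α₂ / k < ξ₂ := by
      rw [div_add_div _ _ hξ10 hk0, div_lt_iff₀ (mul_pos hξ₁ hk)]
      nlinarith
    linarith
  have h1k : (0:ℝ) < 1 + (1 - p) * k := by nlinarith
  have hη₂pos : 0 < η₂ := lt_of_lt_of_le (by positivity) h1
  have hθ₂ : θ₂ = η₂ * ξ₂ - η₂ * α₂ / k - α₂ + α₂ / k := by
    rw [eq_div_iff hA0] at hη₂
    field_simp at hη₂ ⊢
    linarith
  have hg1 : θ₁ + α₁ < η₂ * ξ₀ := (div_lt_iff₀ hξ₀).1 h3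
  have hfeas1 : 1 ≤ η₂ * (1 + (1 - p) * k) := (div_le_iff₀ h1k).1 h1
  -- key algebraic identity: completion of squares
  have key : ∀ x n1 n2 : ℝ, JC ((1 - η₂) / k, 0, η₂) - JC (x, n1, n2) =
      (ξ₀ * η₂ - (θ₁ + α₁)) * n1
      + (k * α₂ / 2) * (x - (1 - η₂) / k + (n2 - η₂) / k) ^ 2
      + (ξ₁ / 2) * (n1 + (ξ₀ / ξ₁) * (n2 - η₂)) ^ 2
      + ((ξ₂ - α₂ / k - ξ₀ ^ 2 / ξ₁) / 2) * (n2 - η₂) ^ 2 := by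
    intro x n1 n2
    simp only [JC]
    rw [hθ₂]
    field_simp
    ring
  refine ⟨hA, ⟨⟨?_, ?_, le_refl 0, hτ.le, hη₂pos.le, h2⟩, ?_⟩, ?_⟩
  · exact div_nonneg (by linarith) hk.le
  · rw [div_le_iff₀ hk]; nlinarith
  · rintro ⟨x, n1, n2⟩ ⟨hx0, hx1, hn10, hn1τ, hn20, hn21⟩
    have hkey := key x n1 n2
    have t0 : 0 ≤ (ξ₀ * η₂ - (θ₁ + α₁)) * n1 := mul_nonneg (by nlinarith) hn10
    have s1 : 0 ≤ (k * α₂ / 2) * (x - (1 - η₂) / k + (n2 - η₂) / k) ^ 2 := by positivity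
    have s2 : 0 ≤ (ξ₁ / 2) * (n1 + (ξ₀ / ξ₁) * (n2 - η₂)) ^ 2 := by positivity
    have s3 : 0 ≤ ((ξ₂ - α₂ / k - ξ₀ ^ 2 / ξ₁) / 2) * (n2 - η₂) ^ 2 := by positivity
    linarith
  · rintro ⟨x, n1, n2⟩ ⟨hx0, hx1, hn10, hn1τ, hn20, hn21⟩ heq
    have hkey := key x n1 n2
    rw [heq, sub_self] at hkey
    have t0 : 0 ≤ (ξ₀ * η₂ - (θ₁ + α₁)) * n1 := mul_nonneg (by nlinarith) hn10
    have s1 : 0 ≤ (k * α₂ / 2) * (x - (1 - η₂) / k + (n2 - η₂) / k) ^ 2 := by positivity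
    have s2 : 0 ≤ (ξ₁ / 2) * (n1 + (ξ₀ / ξ₁) * (n2 - η₂)) ^ 2 := by positivity
    have s3 : 0 ≤ ((ξ₂ - α₂ / k - ξ₀ ^ 2 / ξ₁) / 2) * (n2 - η₂) ^ 2 := by positivity
    have e3 : (n2 - η₂) ^ 2 = 0 := by
      have h0 : ((ξ₂ - α₂ / k - ξ₀ ^ 2 / ξ₁) / 2) * (n2 - η₂) ^ 2 = 0 :=
        le_antisymm (by linarith) s3
      rcases mul_eq_zero.1 h0 with h | h
      · exact absurd h (by positivity)
      · exact h
    have hn2 : n2 = η₂ := by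
      have := pow_eq_zero_iff (n := 2) (by norm_num) |>.1 e3
      linarith [sub_eq_zero.1 this]
    have e2 : (n1 + (ξ₀ / ξ₁) * (n2 - η₂)) ^ 2 = 0 := by
      have h0 : (ξ₁ / 2) * (n1 + (ξ₀ / ξ₁) * (n2 - η₂)) ^ 2 = 0 := le_antisymm (by linarith) s2
      rcases mul_eq_zero.1 h0 with h | h
      · exact absurd h (by positivity)
      · exact h
    have hn1 : n1 = 0 := by
      have := pow_eq_zero_iff (n := 2) (by norm_num) |>.1 e2
      rw [hn2] at this; simpa using this
    have e1 : (x - (1 - η₂) / k + (n2 - η₂) / k) ^ 2 = 0 := by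
      have h0 : (k * α₂ / 2) * (x - (1 - η₂) / k + (n2 - η₂) / k) ^ 2 = 0 :=
        le_antisymm (by linarith) s1
      rcases mul_eq_zero.1 h0 with h | h
      · exact absurd h (by positivity)
      · exact h
    have hx : x = (1 - η₂) / k := by
      have := pow_eq_zero_iff (n := 2) (by norm_num) |>.1 e1
      rw [hn2] at this
      simp at this
      linarith
    simp [hx, hn1, hn2]
end
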